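/- arXiv:math/0607013 — 2 statements merged into one kernel-verified Lean document; each statement's English description precedes it below -/
import Mathlib

section
/- Let s ∈ (0,1] and R > 0, and let f : ℝ → ℝ be supported in [0,1], square integrable, and satisfy |f(x) − f(y)| ≤ R·|x−y|^s for all x,y ∈ [0,1]. Then for every D ∈ ℕ*, ‖f − Π_{S_{(1,D)}}(f)‖_2² ≤ R²·D^{−2s}, where Π_{S_{(1,D)}} is the orthogonal projection in L²(ℝ) onto S_{(1,D)}. -/
open MeasureTheory Set

noncomputable def haarFn (D : ℕ) (k : ℤ) (x : ℝ) : ℝ :=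
  Real.sqrt D * Set.indicator (Set.Ico ((k : ℝ) / D) (((k : ℝ) + 1) / D)) (fun _ => (1 : ℝ)) x

noncomputable def projHaar (D : ℕ) (f : ℝ → ℝ) (x : ℝ) : ℝ :=
  ∑' k : ℤ, (∫ y, haarFn D k y * f y) * haarFn D k x

noncomputable def residHaar (D : ℕ) (f : ℝ → ℝ) : ℝ :=
  ∫ x, (f x - projHaar D f x) ^ 2

/-!
The projection onto functions constant on the cells `[k/D, (k+1)/D)` replaces `f` on each cell
by its average there. For `x ∈ [0,1)` the whole cell of `x` lies in `[0,1]` and has length `1/D`,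
so the Hölder bound gives `|f x - Π f x| ≤ R D^{-s}`. For `x ∉ [0,1]` the open cell of `x` misses
`[0,1]`, so both `f x` and `Π f x` vanish. Integrating the squared residual over `[0,1)` gives
`R² D^{-2s}`.
-/

open Filter Topology

lemma continuousOn_of_abs_sub_le_rpow {f : ℝ → ℝ} {S : Set ℝ} {R s : ℝ} (hs : 0 < s)
    (hf : ∀ x ∈ S, ∀ y ∈ S, |f x - f y| ≤ R * |x - y| ^ s) : ContinuousOn f S := by
  intro x hx
  rw [ContinuousWithinAt, tendsto_iff_dist_tendsto_zero]
  have hbound : Tendsto (fun y => R * |y - x| ^ s) (𝓝[S] x) (𝓝 0) := by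
    have hcont : Continuous fun y : ℝ => R * |y - x| ^ s := by
      fun_prop (disch := exact hs.le)
    simpa [Real.zero_rpow hs.ne'] using (hcont.tendsto x).mono_left nhdsWithin_le_nhds
  refine squeeze_zero' (Eventually.of_forall fun _ => dist_nonneg) ?_ hbound
  filter_upwards [self_mem_nhdsWithin] with y hy
  exact hf y hy x hx

lemma abs_sub_setAverage_le {α : Type*} [MeasurableSpace α] {μ : Measure α} {S : Set α}
    (h0 : μ S ≠ 0) (hfin : μ S ≠ ⊤) {f : α → ℝ} (hf : IntegrableOn f S μ) {x : α} {ε : ℝ}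
    (hε : ∀ y ∈ S, |f x - f y| ≤ ε) : |f x - ⨍ y in S, f y ∂μ| ≤ ε := by
  have hS : 0 < μ.real S := ENNReal.toReal_pos h0 hfin
  have hshift : f x - ⨍ y in S, f y ∂μ = (μ.real S)⁻¹ * ∫ y in S, (f x - f y) ∂μ := by
    rw [setAverage_eq, smul_eq_mul, integral_sub (integrableOn_const (C := f x) hfin) hf,
      setIntegral_const, smul_eq_mul]
    field_simp
  have hint : |∫ y in S, (f x - f y) ∂μ| ≤ ε * μ.real S :=
    norm_setIntegral_le_of_norm_le_const hfin.lt_top (f := fun y => f x - f y) hε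
  rw [hshift, abs_mul, abs_inv, abs_of_pos hS, inv_mul_le_iff₀ hS]
  linarith

def cell (D : ℕ) (k : ℤ) : Set ℝ := Ico (k / D) ((k + 1) / D)

lemma haarFn_eq (D : ℕ) (k : ℤ) (x : ℝ) : haarFn D k x = √D * (cell D k).indicator 1 x := rfl

section cell

variable {D : ℕ} {k : ℤ} {x y : ℝ}

lemma mem_cell_iff (hD : 0 < D) : x ∈ cell D k ↔ ⌊(D : ℝ) * x⌋ = k := by
  have hD' : (0 : ℝ) < D := by exact_mod_cast hD
  rw [cell, Int.floor_eq_iff, mem_Ico, div_le_iff₀ hD', lt_div_iff₀ hD', mul_comm x]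

lemma volume_cell (D : ℕ) (k : ℤ) : volume (cell D k) = ENNReal.ofReal (1 / D) := by
  rw [cell, Real.volume_Ico, ← sub_div, add_sub_cancel_left]

lemma abs_sub_le_of_mem_cell (hx : x ∈ cell D k) (hy : y ∈ cell D k) : |x - y| ≤ 1 / D := by
  rw [cell, mem_Ico] at hx hy
  rw [abs_sub_le_iff]
  constructor <;> linarith [add_div (k : ℝ) 1 D]

lemma cell_subset_Icc (hk₀ : 0 ≤ k) (hkD : k < D) : cell D k ⊆ Icc 0 1 := by
  have hD : (0 : ℝ) < D := by exact_mod_cast hk₀.trans_lt hkD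
  have hk₀' : (0 : ℝ) ≤ k := by exact_mod_cast hk₀
  have hkD' : (k : ℝ) + 1 ≤ D := by exact_mod_cast hkD
  intro y ⟨hy₀, hy₁⟩
  exact ⟨(div_nonneg hk₀' hD.le).trans hy₀, hy₁.le.trans (div_le_one_of_le₀ hkD' hD.le)⟩

lemma setIntegral_cell_eq_zero (hD : 0 < D) {f : ℝ → ℝ}
    (hf : ∀ x, x ∉ Icc (0 : ℝ) 1 → f x = 0) (hk : k < 0 ∨ D ≤ k) : ∫ y in cell D k, f y = 0 := by
  rw [cell, integral_Ico_eq_integral_Ioo]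
  refine setIntegral_eq_zero_of_forall_eq_zero fun y ⟨hy₀, hy₁⟩ => hf y fun ⟨h₀, h₁⟩ => ?_
  rcases hk with hk | hk
  · have : (k : ℝ) + 1 ≤ 0 := by exact_mod_cast hk
    linarith [div_nonpos_of_nonpos_of_nonneg this D.cast_nonneg]
  · have hkD : (D : ℝ) ≤ k := by exact_mod_cast hk
    have : 1 ≤ (k : ℝ) / D := by rwa [one_le_div₀ (by exact_mod_cast hD)]
    linarith

end cell

lemma integral_haarFn_mul (D : ℕ) (k : ℤ) (f : ℝ → ℝ) :
    ∫ y, haarFn D k y * f y = √D * ∫ y in cell D k, f y := by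
  simp_rw [haarFn_eq, mul_assoc, ← indicator_mul_left, Pi.one_apply, one_mul]
  rw [integral_const_mul, integral_indicator (s := cell D k) measurableSet_Ico]

lemma projHaar_eq_setAverage {D : ℕ} (hD : 0 < D) (f : ℝ → ℝ) (x : ℝ) :
    projHaar D f x = ⨍ y in cell D ⌊(D : ℝ) * x⌋, f y := by
  have hx : x ∈ cell D ⌊(D : ℝ) * x⌋ := (mem_cell_iff hD).2 rfl
  rw [projHaar, tsum_eq_single ⌊(D : ℝ) * x⌋ fun k hk => ?_]
  · rw [integral_haarFn_mul, haarFn_eq, indicator_of_mem hx, setAverage_eq, measureReal_def,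
      volume_cell, ENNReal.toReal_ofReal (by positivity), smul_eq_mul, Pi.one_apply, mul_one,
      mul_right_comm, Real.mul_self_sqrt D.cast_nonneg, one_div, inv_inv]
  · have : x ∉ cell D k := fun h => hk ((mem_cell_iff hD).1 h).symm
    rw [haarFn_eq, indicator_of_notMem this, mul_zero, mul_zero]

section Holder

variable {D : ℕ} {f : ℝ → ℝ} {x : ℝ}

lemma abs_sub_projHaar_le {s R : ℝ} (hD : 0 < D) (hs : 0 < s) (hR : 0 ≤ R)
    (hf : ∀ x ∈ Icc (0 : ℝ) 1, ∀ y ∈ Icc (0 : ℝ) 1, |f x - f y| ≤ R * |x - y| ^ s)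
    (hx : x ∈ Ico (0 : ℝ) 1) : |f x - projHaar D f x| ≤ R * (D : ℝ) ^ (-s) := by
  have hD' : (0 : ℝ) < D := by exact_mod_cast hD
  set k := ⌊(D : ℝ) * x⌋
  have hxk : x ∈ cell D k := (mem_cell_iff hD).2 rfl
  have hk : cell D k ⊆ Icc 0 1 :=
    cell_subset_Icc (Int.floor_nonneg.2 (by nlinarith [hx.1]))
      (Int.floor_lt.2 (by push_cast; nlinarith [hx.2]))
  rw [projHaar_eq_setAverage hD]
  refine abs_sub_setAverage_le (by simp [volume_cell, hD]) (by simp [volume_cell])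
    ((continuousOn_of_abs_sub_le_rpow hs hf).integrableOn_Icc.mono_set hk) fun y hy => ?_
  calc |f x - f y| ≤ R * |x - y| ^ s := hf x (hk hxk) y (hk hy)
    _ ≤ R * (1 / D) ^ s := by gcongr; exact abs_sub_le_of_mem_cell hxk hy
    _ = R * (D : ℝ) ^ (-s) := by rw [one_div, Real.inv_rpow hD'.le, Real.rpow_neg hD'.le]

lemma projHaar_eq_zero_of_notMem (hD : 0 < D) (hf : ∀ x, x ∉ Icc (0 : ℝ) 1 → f x = 0)
    (hx : x ∉ Icc (0 : ℝ) 1) : projHaar D f x = 0 := by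
  have hD' : (0 : ℝ) < D := by exact_mod_cast hD
  rw [projHaar_eq_setAverage hD, setAverage_eq, setIntegral_cell_eq_zero hD hf ?_, smul_zero]
  rcases not_and_or.1 hx with hx | hx
  · exact .inl (Int.floor_lt.2 (by push_cast; nlinarith))
  · exact .inr (Int.le_floor.2 (by push_cast; nlinarith))

end Holder

theorem statement12_general (s R : ℝ) (hs : s ∈ Set.Ioc (0 : ℝ) 1) (hR : 0 < R)
    (f : ℝ → ℝ)
    (hsupp : ∀ x, x ∉ Set.Icc (0 : ℝ) 1 → f x = 0)
    (hHolder : ∀ x ∈ Set.Icc (0 : ℝ) 1, ∀ y ∈ Set.Icc (0 : ℝ) 1,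
      |f x - f y| ≤ R * |x - y| ^ s)
    (D : ℕ) (hD : 1 ≤ D) :
    residHaar D f ≤ R ^ 2 * (D : ℝ) ^ (-(2 * s)) := by
  set C := R * (D : ℝ) ^ (-s)
  -- at `x = 1` the residual is `f 1`, which need not vanish
  have hpt : ∀ x ≠ (1 : ℝ),
      (f x - projHaar D f x) ^ 2 ≤ (Ico (0 : ℝ) 1).indicator (fun _ => C ^ 2) x := by
    intro x hx1
    by_cases hx : x ∈ Ico (0 : ℝ) 1
    · rw [indicator_of_mem hx, ← sq_abs]
      gcongr
      exact abs_sub_projHaar_le hD hs.1 hR.le hHolder hx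
    · have hx' : x ∉ Icc (0 : ℝ) 1 := fun h => hx ⟨h.1, h.2.lt_of_ne hx1⟩
      rw [indicator_of_notMem hx, hsupp x hx', projHaar_eq_zero_of_notMem hD hsupp hx']
      norm_num
  calc residHaar D f ≤ ∫ x, (Ico (0 : ℝ) 1).indicator (fun _ => C ^ 2) x :=
        integral_mono_of_nonneg (ae_of_all _ fun _ => sq_nonneg _)
          ((integrableOn_const (C := C ^ 2) measure_Ico_lt_top.ne).integrable_indicator
            measurableSet_Ico)
          ((volume.ae_ne 1).mono hpt)
    _ = C ^ 2 := by simp [integral_indicator measurableSet_Ico]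
    _ = R ^ 2 * (D : ℝ) ^ (-(2 * s)) := by
      rw [mul_pow, ← Real.rpow_mul_natCast D.cast_nonneg]
      ring_nf

/-- A Hölder function of order `s ∈ (0,1]` supported in `[0,1]` satisfies
`‖f - Π_{S_{(1,D)}}(f)‖₂² ≤ R² D^{-2s}` for every `D ≥ 1`. -/
theorem statement12 (s R : ℝ) (hs : s ∈ Set.Ioc (0 : ℝ) 1) (hR : 0 < R)
    (f : ℝ → ℝ) (hmeas : Measurable f)
    (hsupp : ∀ x, x ∉ Set.Icc (0 : ℝ) 1 → f x = 0)
    (hL2 : Integrable (fun x => f x ^ 2))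
    (hHolder : ∀ x ∈ Set.Icc (0 : ℝ) 1, ∀ y ∈ Set.Icc (0 : ℝ) 1,
      |f x - f y| ≤ R * |x - y| ^ s)
    (D : ℕ) (hD : 1 ≤ D) :
    residHaar D f ≤ R ^ 2 * (D : ℝ) ^ (-(2 * s)) :=
  statement12_general s R hs hR f hsupp hHolder D hD
end

section
/- Let f_0 be a density on ℝ, K ⊂ ℝ×(0,∞), F = { (1/σ)·f_0((·−μ)/σ) : (μ,σ) ∈ K }, and let M be an at most countable index set. For each m ∈ M let T̂_m : ℝⁿ → ℝ be a measurable function and define T̃_m(x_1,…,x_n) = inf_{(μ,σ)∈K} T̂_m((x_1−μ)/σ,…,(x_n−μ)/σ). Let {q_m : m ∈ M} be real numbers such that, when Y_1,…,Y_n are i.i.d. with density f_0, P( sup_{m∈M} (T̂_m(Y_1,…,Y_n) − q_m) > 0 ) ≤ α. Then for every f ∈ F, if X_1,…,X_n are i.i.d. with density f, P( sup_{m∈M} (T̃_m(X_1,…,X_n) − q_m) > 0 ) ≤ α. -/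
open MeasureTheory Set

noncomputable def densMeasure (f : ℝ → ℝ) : Measure ℝ :=
  (volume : Measure ℝ).withDensity fun x => ENNReal.ofReal (f x)

noncomputable def iidMeasure (n : ℕ) (f : ℝ → ℝ) : Measure (Fin n → ℝ) :=
  Measure.pi fun _ => densMeasure f

instance (f : ℝ → ℝ) : SigmaFinite (densMeasure f) := by
  unfold densMeasure; infer_instance

lemma measurePreserving_scale (f0 : ℝ → ℝ) (hm0 : Measurable f0)
    (μ σ : ℝ) (hσ : 0 < σ) :
    MeasurePreserving (fun x => (x - μ) / σ)
      (densMeasure (fun x => (1 / σ) * f0 ((x - μ) / σ))) (densMeasure f0) := by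
  have hTm : Measurable (fun x : ℝ => (x - μ) / σ) := (measurable_id.sub_const μ).div_const σ
  refine ⟨hTm, ?_⟩
  have hcomp : (fun x : ℝ => (x - μ) / σ) = (fun x => x * σ⁻¹) ∘ (fun x => x + (-μ)) := by
    ext x; simp [div_eq_mul_inv, sub_eq_add_neg]
  have hmapvol : Measure.map (fun x : ℝ => (x - μ) / σ) volume
      = ENNReal.ofReal σ • volume := by
    rw [hcomp, ← Measure.map_map (measurable_mul_const σ⁻¹) (measurable_add_const (-μ)),
      map_add_right_eq_self volume (-μ), Real.map_volume_mul_right (inv_ne_zero hσ.ne')]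
    rw [inv_inv, abs_of_pos hσ]
  ext S hS
  rw [Measure.map_apply hTm hS]
  rw [densMeasure, densMeasure, withDensity_apply _ (hTm hS), withDensity_apply _ hS]
  have key : ∫⁻ x in (fun x : ℝ => (x - μ) / σ) ⁻¹' S,
      ENNReal.ofReal (f0 ((x - μ) / σ)) ∂volume
      = ∫⁻ y in S, ENNReal.ofReal (f0 y) ∂(Measure.map (fun x : ℝ => (x - μ) / σ) volume) :=
    (setLIntegral_map hS (hm0.ennreal_ofReal) hTm).symm
  calc ∫⁻ x in (fun x : ℝ => (x - μ) / σ) ⁻¹' S,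
        ENNReal.ofReal ((1 / σ) * f0 ((x - μ) / σ)) ∂volume
      = ∫⁻ x in (fun x : ℝ => (x - μ) / σ) ⁻¹' S,
        ENNReal.ofReal (1 / σ) * ENNReal.ofReal (f0 ((x - μ) / σ)) ∂volume := by
        congr 1; ext x; rw [ENNReal.ofReal_mul (by positivity)]
    _ = ENNReal.ofReal (1 / σ) * ∫⁻ x in (fun x : ℝ => (x - μ) / σ) ⁻¹' S,
        ENNReal.ofReal (f0 ((x - μ) / σ)) ∂volume := by
        exact lintegral_const_mul _ (by fun_prop)
    _ = ENNReal.ofReal (1 / σ) * (ENNReal.ofReal σ *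
        ∫⁻ y in S, ENNReal.ofReal (f0 y) ∂volume) := by
        rw [key, hmapvol]
        simp [Measure.restrict_smul, lintegral_smul_measure]
    _ = ∫⁻ y in S, ENNReal.ofReal (f0 y) ∂volume := by
        rw [← mul_assoc, ← ENNReal.ofReal_mul (by positivity)]
        rw [one_div, inv_mul_cancel₀ hσ.ne', ENNReal.ofReal_one, one_mul]

/-- Level of the multiple test over a translation/scale family, case (ii) of Section 3.1:
with `T̃_m(x) = inf_{(μ,σ) ∈ K} T̂_m((x-μ)/σ)`, if the test based on the `T̂_m` has level `α`
under `f₀`, then the test based on the `T̃_m` has level `α` over the whole family `F`. -/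
theorem statement17 {ι : Type*} [Countable ι] (n : ℕ) (α : ℝ)
    (hα : α ∈ Set.Ioo (0 : ℝ) 1)
    (f0 : ℝ → ℝ) (hm0 : Measurable f0) (hpos0 : ∀ x, 0 ≤ f0 x) (hint0 : (∫ x, f0 x) = 1)
    (K : Set (ℝ × ℝ)) (hK : ∀ p ∈ K, 0 < p.2)
    (That : ι → (Fin n → ℝ) → ℝ) (hT : ∀ m, Measurable (That m))
    (q : ι → ℝ)
    (hlevel : iidMeasure n f0 {y | ∃ m : ι, q m < That m y} ≤ ENNReal.ofReal α) :
    ∀ p ∈ K,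
      iidMeasure n (fun x => (1 / p.2) * f0 ((x - p.1) / p.2))
          {x | ∃ m : ι, (q m : EReal) <
            ⨅ p' : K, ((That m fun i => (x i - (p' : ℝ × ℝ).1) / (p' : ℝ × ℝ).2 : ℝ) : EReal)} ≤
        ENNReal.ofReal α := by
  intro p hp
  set S : Set (Fin n → ℝ) := {y | ∃ m : ι, q m < That m y} with hSdef
  have hSmeas : MeasurableSet S := by
    have : S = ⋃ m : ι, {y | q m < That m y} := by
      ext y; simp [hSdef, Set.mem_iUnion]
    rw [this]
    exact MeasurableSet.iUnion fun m => measurableSet_lt measurable_const (hT m)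
  have hMP : MeasurePreserving (fun x : Fin n → ℝ => fun i => (x i - p.1) / p.2)
      (iidMeasure n (fun x => (1 / p.2) * f0 ((x - p.1) / p.2))) (iidMeasure n f0) :=
    measurePreserving_pi _ _ fun _ => measurePreserving_scale f0 hm0 p.1 p.2 (hK p hp)
  have hsub : {x : Fin n → ℝ | ∃ m : ι, (q m : EReal) <
        ⨅ p' : K, ((That m fun i => (x i - (p' : ℝ × ℝ).1) / (p' : ℝ × ℝ).2 : ℝ) : EReal)}
      ⊆ (fun x : Fin n → ℝ => fun i => (x i - p.1) / p.2) ⁻¹' S := by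
    intro x ⟨m, hm⟩
    refine ⟨m, ?_⟩
    have := hm.trans_le (iInf_le (fun p' : K =>
      ((That m fun i => (x i - (p' : ℝ × ℝ).1) / (p' : ℝ × ℝ).2 : ℝ) : EReal)) ⟨p, hp⟩)
    exact_mod_cast this
  calc iidMeasure n (fun x => (1 / p.2) * f0 ((x - p.1) / p.2))
        {x | ∃ m : ι, (q m : EReal) <
          ⨅ p' : K, ((That m fun i => (x i - (p' : ℝ × ℝ).1) / (p' : ℝ × ℝ).2 : ℝ) : EReal)}
      ≤ iidMeasure n (fun x => (1 / p.2) * f0 ((x - p.1) / p.2))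
        ((fun x : Fin n → ℝ => fun i => (x i - p.1) / p.2) ⁻¹' S) := measure_mono hsub
    _ = iidMeasure n f0 S := hMP.measure_preimage hSmeas.nullMeasurableSet
    _ ≤ ENNReal.ofReal α := hlevel
end
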